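/- arXiv:1304.0490 — 5 statements merged into one kernel-verified Lean document; each statement's English description precedes it below -/
import Mathlib

section
/- Let σ be a distortion, τ_σ(p) := ∫₀^p σ(u) du, and τ_σ⁻¹(u) := inf{p ∈ [0,1] : τ_σ(p) ≥ u}. Let L be a real random variable and U a uniformly distributed random variable on the same probability space, and set L_σ := F_L⁻¹(τ_σ⁻¹(U)). Then for every y ∈ ℝ at which both sides are continuous (equivalently, for Lebesgue-almost every y ∈ ℝ), P(L_σ ≤ y) = τ_σ(F_L(y)). -/
open MeasureTheory Set
open scoped ENNReal

/-- The cumulative distribution function `F_L(x) = P(L ≤ x)` of a random variable `L`. -/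
noncomputable def cdfRV {Ω : Type*} [MeasurableSpace Ω] (P : Measure Ω) (L : Ω → ℝ) (x : ℝ) : ℝ :=
  (P {ω | L ω ≤ x}).toReal

/-- The generalized inverse (quantile function) `F_L⁻¹(u) = inf {x : F_L(x) ≥ u}`. -/
noncomputable def quantileRV {Ω : Type*} [MeasurableSpace Ω] (P : Measure Ω) (L : Ω → ℝ)
    (u : ℝ) : ℝ :=
  sInf {x : ℝ | u ≤ cdfRV P L x}

/-- `τ_σ(p) = ∫₀^p σ(u) du`, the antiderivative of the distortion `σ`. -/
noncomputable def tauSigma (σ : ℝ → ℝ) (p : ℝ) : ℝ := ∫ u in (0:ℝ)..p, σ u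

/-- The generalized inverse `τ_σ⁻¹(u) = inf {p ∈ [0,1] : τ_σ(p) ≥ u}`. -/
noncomputable def tauSigmaInv (σ : ℝ → ℝ) (u : ℝ) : ℝ :=
  sInf {p : ℝ | p ∈ Icc (0:ℝ) 1 ∧ u ≤ tauSigma σ p}

/-- `U` is uniformly distributed: `P(U ≤ u) = u` for all `u ∈ [0,1]`. -/
def IsUniformRV {Ω : Type*} [MeasurableSpace Ω] (P : Measure Ω) (U : Ω → ℝ) : Prop :=
  ∀ u ∈ Icc (0:ℝ) 1, (P {ω | U ω ≤ u}).toReal = u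

/-!
Both generalized inverses are Galois-adjoint to their functions: for `v ∈ (0,1)`,
`F_L⁻¹(v) ≤ y ↔ v ≤ F_L(y)` by right continuity of `F_L`, and `τ_σ⁻¹(u) ≤ q ↔ u ≤ τ_σ(q)` by
continuity and monotonicity of `τ_σ` on `[0,1]`. On the almost sure event `0 < U < 1` the two
combine to `{L_σ ≤ y} = {U ≤ τ_σ(F_L(y))}`, whose probability is `τ_σ(F_L(y))` since `U` is
uniform. This holds for every `y`, not only almost every one.
-/

open ProbabilityTheory

lemma le_apply_csInf_of_continuousWithinAt {f : ℝ → ℝ} {S : Set ℝ} {v : ℝ} (hne : S.Nonempty)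
    (hbdd : BddBelow S) (hf : ContinuousWithinAt f S (sInf S)) (hle : ∀ x ∈ S, v ≤ f x) :
    v ≤ f (sInf S) :=
  isClosed_Ici.closure_subset (hf.mem_closure (csInf_mem_closure hne hbdd) hle)

lemma StieltjesFunction.csInf_setOf_le_le_iff (f : StieltjesFunction ℝ) {v y : ℝ}
    (hne : ∃ x, v ≤ f x) (hbdd : BddBelow {x | v ≤ f x}) :
    sInf {x | v ≤ f x} ≤ y ↔ v ≤ f y := by
  refine ⟨fun h => ?_, fun h => csInf_le hbdd h⟩
  have hcont := (f.right_continuous (sInf {x | v ≤ f x})).mono fun x hx => csInf_le hbdd hx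
  exact (le_apply_csInf_of_continuousWithinAt hne hbdd hcont fun _ hx => hx).trans (f.mono h)

lemma cdfRV_eq_cdf_map {Ω : Type*} [MeasurableSpace Ω] (P : Measure Ω) [IsProbabilityMeasure P]
    {L : Ω → ℝ} (hL : Measurable L) (x : ℝ) : cdfRV P L x = cdf (P.map L) x := by
  have := Measure.isProbabilityMeasure_map (μ := P) hL.aemeasurable
  rw [cdf_eq_real, measureReal_def, Measure.map_apply hL measurableSet_Iic]
  rfl

lemma quantileRV_le_iff {Ω : Type*} [MeasurableSpace Ω] (P : Measure Ω) [IsProbabilityMeasure P]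
    {L : Ω → ℝ} (hL : Measurable L) {v : ℝ} (hv : v ∈ Ioo (0:ℝ) 1) (y : ℝ) :
    quantileRV P L v ≤ y ↔ v ≤ cdfRV P L y := by
  have := Measure.isProbabilityMeasure_map (μ := P) hL.aemeasurable
  simp only [quantileRV, cdfRV_eq_cdf_map P hL]
  refine (cdf (P.map L)).csInf_setOf_le_le_iff ?_ ?_
  · obtain ⟨x, hx⟩ := ((tendsto_cdf_atTop (P.map L)).eventually_const_lt hv.2).exists
    exact ⟨x, hx.le⟩
  · obtain ⟨x₀, hx₀⟩ := ((tendsto_cdf_atBot (P.map L)).eventually_lt_const hv.1).exists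
    exact ⟨x₀, fun x hx => le_of_not_gt fun hlt => (hx.trans ((cdf _).mono hlt.le)).not_gt hx₀⟩

lemma cdfRV_mem_Icc {Ω : Type*} [MeasurableSpace Ω] (P : Measure Ω) [IsProbabilityMeasure P]
    (L : Ω → ℝ) (x : ℝ) : cdfRV P L x ∈ Icc (0:ℝ) 1 :=
  ⟨ENNReal.toReal_nonneg, ENNReal.toReal_le_of_le_ofReal zero_le_one (by simp [prob_le_one])⟩

section Distortion

variable {σ : ℝ → ℝ}

lemma tauSigma_zero : tauSigma σ 0 = 0 := intervalIntegral.integral_same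

lemma intervalIntegrable_of_monotoneOn_Icc (hσ_mono : MonotoneOn σ (Icc (0:ℝ) 1)) {a b : ℝ}
    (ha : a ∈ Icc (0:ℝ) 1) (hb : b ∈ Icc (0:ℝ) 1) : IntervalIntegrable σ volume a b :=
  (hσ_mono.mono (uIcc_subset_Icc ha hb)).intervalIntegrable

lemma tauSigma_continuousOn (hσ_mono : MonotoneOn σ (Icc (0:ℝ) 1)) :
    ContinuousOn (tauSigma σ) (Icc (0:ℝ) 1) := by
  have h := intervalIntegral.continuousOn_primitive_interval' (a := 0)
    (intervalIntegrable_of_monotoneOn_Icc hσ_mono (left_mem_Icc.2 zero_le_one)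
      (right_mem_Icc.2 zero_le_one)) left_mem_uIcc
  rwa [uIcc_of_le zero_le_one] at h

lemma tauSigma_monotoneOn (hσ_nonneg : ∀ u ∈ Icc (0:ℝ) 1, 0 ≤ σ u)
    (hσ_mono : MonotoneOn σ (Icc (0:ℝ) 1)) : MonotoneOn (tauSigma σ) (Icc (0:ℝ) 1) := by
  intro p hp q hq hpq
  have h0 : (0:ℝ) ∈ Icc (0:ℝ) 1 := left_mem_Icc.2 zero_le_one
  have hsplit : tauSigma σ p + ∫ u in p..q, σ u = tauSigma σ q :=
    intervalIntegral.integral_add_adjacent_intervals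
      (intervalIntegrable_of_monotoneOn_Icc hσ_mono h0 hp)
      (intervalIntegrable_of_monotoneOn_Icc hσ_mono hp hq)
  have hnonneg : 0 ≤ ∫ u in p..q, σ u :=
    intervalIntegral.integral_nonneg hpq fun u hu => hσ_nonneg u ⟨hp.1.trans hu.1, hu.2.trans hq.2⟩
  linarith

lemma tauSigmaInv_le_iff (hσ_nonneg : ∀ u ∈ Icc (0:ℝ) 1, 0 ≤ σ u)
    (hσ_mono : MonotoneOn σ (Icc (0:ℝ) 1)) {u q : ℝ} (hu : u ≤ tauSigma σ 1)
    (hq : q ∈ Icc (0:ℝ) 1) : tauSigmaInv σ u ≤ q ↔ u ≤ tauSigma σ q := by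
  set S := {p : ℝ | p ∈ Icc (0:ℝ) 1 ∧ u ≤ tauSigma σ p}
  have hbdd : BddBelow S := ⟨0, fun p hp => hp.1.1⟩
  refine ⟨fun h => ?_, fun h => csInf_le hbdd ⟨hq, h⟩⟩
  have h₁ : (1:ℝ) ∈ S := ⟨right_mem_Icc.2 zero_le_one, hu⟩
  have hne : S.Nonempty := ⟨1, h₁⟩
  have hmem : sInf S ∈ Icc (0:ℝ) 1 := ⟨le_csInf hne fun p hp => hp.1.1, csInf_le hbdd h₁⟩
  have hcont := ((tauSigma_continuousOn hσ_mono) _ hmem).mono fun p (hp : p ∈ S) => hp.1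
  exact (le_apply_csInf_of_continuousWithinAt hne hbdd hcont fun p hp => hp.2).trans
    (tauSigma_monotoneOn hσ_nonneg hσ_mono hmem hq h)

lemma tauSigmaInv_mem_Ioo (hσ_nonneg : ∀ u ∈ Icc (0:ℝ) 1, 0 ≤ σ u)
    (hσ_mono : MonotoneOn σ (Icc (0:ℝ) 1)) {u : ℝ} (hu₀ : 0 < u) (hu₁ : u < tauSigma σ 1) :
    tauSigmaInv σ u ∈ Ioo (0:ℝ) 1 := by
  have hu₀' : tauSigma σ 0 < u := by rwa [tauSigma_zero]
  obtain ⟨p, hp, rfl⟩ :=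
    intermediate_value_Ioo zero_le_one (tauSigma_continuousOn hσ_mono) ⟨hu₀', hu₁⟩
  refine ⟨lt_of_not_ge fun h => ?_, ?_⟩
  · exact ((tauSigmaInv_le_iff hσ_nonneg hσ_mono hu₁.le (left_mem_Icc.2 zero_le_one)).1 h).not_gt
      hu₀'
  · exact ((tauSigmaInv_le_iff hσ_nonneg hσ_mono hu₁.le (Ioo_subset_Icc_self hp)).2 le_rfl).trans_lt
      hp.2

lemma tauSigma_mem_Icc (hσ_nonneg : ∀ u ∈ Icc (0:ℝ) 1, 0 ≤ σ u)
    (hσ_mono : MonotoneOn σ (Icc (0:ℝ) 1)) (hσ_int : ∫ u in (0:ℝ)..1, σ u = 1) {p : ℝ}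
    (hp : p ∈ Icc (0:ℝ) 1) : tauSigma σ p ∈ Icc (0:ℝ) 1 := by
  have hτ := tauSigma_monotoneOn hσ_nonneg hσ_mono
  refine ⟨?_, ?_⟩
  · simpa [tauSigma_zero] using hτ (left_mem_Icc.2 zero_le_one) hp hp.1
  · simpa [tauSigma, hσ_int] using hτ hp (right_mem_Icc.2 zero_le_one) hp.2

end Distortion

lemma IsUniformRV.ae_mem_Ioo {Ω : Type*} [MeasurableSpace Ω] {P : Measure Ω}
    [IsProbabilityMeasure P] {U : Ω → ℝ} (hU : Measurable U) (h : IsUniformRV P U) :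
    ∀ᵐ ω ∂P, U ω ∈ Ioo (0:ℝ) 1 := by
  have hpos : ∀ᵐ ω ∂P, 0 < U ω := by
    simp only [ae_iff, not_lt]
    exact (measureReal_eq_zero_iff (μ := P)).1 (h 0 (left_mem_Icc.2 zero_le_one))
  have hlt : ∀ᵐ ω ∂P, U ω < 1 := by
    have hreal : P.real {ω | U ω < 1} = 1 := by
      refine le_antisymm measureReal_le_one (le_of_forall_sub_le fun ε hε => ?_)
      rcases le_or_gt 1 ε with hε₁ | hε₁
      · linarith [measureReal_nonneg (μ := P) (s := {ω | U ω < 1})]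
      · calc 1 - ε = P.real {ω | U ω ≤ 1 - ε} := (h _ ⟨by linarith, by linarith⟩).symm
          _ ≤ P.real {ω | U ω < 1} := measureReal_mono fun ω (hω : U ω ≤ 1 - ε) => by
              show U ω < 1; linarith
    exact mem_ae_iff.2 ((prob_compl_eq_zero_iff (hU measurableSet_Iio)).2
      ((ENNReal.toReal_eq_one_iff _).1 hreal))
  filter_upwards [hpos, hlt] with ω h₀ h₁ using ⟨h₀, h₁⟩

/-- for the distorted loss `L_σ = F_L⁻¹(τ_σ⁻¹(U))` one has,
for Lebesgue-almost every `y ∈ ℝ`, `P(L_σ ≤ y) = τ_σ(F_L(y))`. -/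
theorem statement_1 {Ω : Type*} [MeasurableSpace Ω] (P : Measure Ω) [IsProbabilityMeasure P]
    (L : Ω → ℝ) (hL : Measurable L)
    (σ : ℝ → ℝ)
    (hσ_nonneg : ∀ u ∈ Icc (0:ℝ) 1, 0 ≤ σ u)
    (hσ_mono : MonotoneOn σ (Icc (0:ℝ) 1))
    (hσ_int : ∫ u in (0:ℝ)..1, σ u = 1)
    (U : Ω → ℝ) (hU : Measurable U) (hUunif : IsUniformRV P U)
    (Lσ : Ω → ℝ) (hLσ : Lσ = fun ω => quantileRV P L (tauSigmaInv σ (U ω))) :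
    ∀ᵐ y ∂(volume : Measure ℝ),
      (P {ω | Lσ ω ≤ y}).toReal = tauSigma σ (cdfRV P L y) := by
  refine ae_of_all _ fun y => ?_
  have hτ₁ : tauSigma σ 1 = 1 := hσ_int
  have hF := cdfRV_mem_Icc P L y
  have hsets : {ω | Lσ ω ≤ y} =ᵐ[P] {ω | U ω ≤ tauSigma σ (cdfRV P L y)} := by
    filter_upwards [hUunif.ae_mem_Ioo hU] with ω hω
    have hu : U ω < tauSigma σ 1 := hω.2.trans_eq hτ₁.symm
    change (Lσ ω ≤ y) = (U ω ≤ tauSigma σ (cdfRV P L y))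
    rw [hLσ, quantileRV_le_iff P hL (tauSigmaInv_mem_Ioo hσ_nonneg hσ_mono hω.1 hu),
      ← tauSigmaInv_le_iff hσ_nonneg hσ_mono hu.le hF]
  rw [measure_congr hsets]
  exact hUunif _ (tauSigma_mem_Icc hσ_nonneg hσ_mono hσ_int hF)
end

section
/- Let σ be a bounded, right-continuous distortion. Then the measure μ_σ on [0,1] defined by μ_σ(A) := σ(0)·δ₀(A) + ∫_A (1−α) dσ(α) is a probability measure, and its cumulative distribution function satisfies μ_σ([0,p]) = (1−p)σ(p) + ∫₀^p σ(α) dα for all p ∈ [0,1]. -/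
open MeasureTheory Set
open scoped ENNReal

/-!
Splitting `1 - α = (1 - p) + (p - α)` on `[0, p]` gives
`μ_σ([0,p]) = σ(0) + (1 - p)(σ(p) - σ(0)) + ∫_{[0,p]} (p - α) dσ(α)`, and by Tonelli the last
integral is `∫₀^p (σ(t⁻) - σ(0)) dt = ∫₀^p σ - p σ(0)`, since `σ` has only countably many jumps.
As `μ_σ` lives on `[0,1]`, its total mass is the value at `p = 1`, namely `∫₀¹ σ = 1`.
-/

noncomputable def muSigma (f : StieltjesFunction ℝ) : Measure ℝ :=
  (ENNReal.ofReal (f 0)) • Measure.dirac 0 +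
    (f.measure.restrict (Icc (0:ℝ) 1)).withDensity (fun α => ENNReal.ofReal (1 - α))

namespace StieltjesFunction

theorem leftLim_eq_self_of_forall_le_eq {f : StieltjesFunction ℝ} {a : ℝ}
    (h : ∀ x ≤ a, f x = f a) : Function.leftLim f a = f a := by
  refine le_antisymm (f.mono.leftLim_le le_rfl) ?_
  simpa [h (a - 1) (by linarith)] using f.mono.le_leftLim (show a - 1 < a by linarith)

theorem leftLim_ae_eq (f : StieltjesFunction ℝ) : Function.leftLim f =ᵐ[volume] f :=
  (measure_eq_zero_iff_ae_notMem.mp (f.countable_leftLim_ne.measure_zero volume)).mono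
    fun _ hx => not_not.mp hx

theorem lintegral_Icc_ofReal_sub (f : StieltjesFunction ℝ) {a p : ℝ} :
    ∫⁻ α in Icc a p, ENNReal.ofReal (p - α) ∂f.measure
      = ∫⁻ t in Ioc a p, ENNReal.ofReal (Function.leftLim f t - Function.leftLim f a) := by
  have hmeas : Measurable (Function.uncurry fun α t : ℝ => (Ioi α).indicator (1 : ℝ → ℝ≥0∞) t) :=
    (measurable_const.indicator (measurableSet_lt measurable_fst measurable_snd) :
      Measurable ({q : ℝ × ℝ | q.1 < q.2}.indicator 1))
  -- Integration by parts: `p - α = λ(Ioc α p)`, and Tonelli turns the integral into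
  -- `∫ t in Ioc a p, dσ(Ico a t)`.
  calc ∫⁻ α in Icc a p, ENNReal.ofReal (p - α) ∂f.measure
      = ∫⁻ α in Icc a p, (∫⁻ t in Ioc a p, (Ioi α).indicator 1 t) ∂f.measure := by
        refine setLIntegral_congr_fun measurableSet_Icc fun α hα => ?_
        rw [lintegral_indicator_one _root_.measurableSet_Ioi,
          Measure.restrict_apply _root_.measurableSet_Ioi,
          inter_comm, Ioc_inter_Ioi, max_eq_right hα.1, Real.volume_Ioc]
    _ = ∫⁻ t in Ioc a p, ∫⁻ α in Icc a p, (Iio t).indicator 1 α ∂f.measure :=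
        lintegral_lintegral_swap hmeas.aemeasurable
    _ = _ := by
        refine setLIntegral_congr_fun measurableSet_Ioc fun t ht => ?_
        rw [lintegral_indicator_one measurableSet_Iio, Measure.restrict_apply measurableSet_Iio,
          ← f.measure_Ico]
        congr 1
        ext α
        simp only [mem_inter_iff, mem_Iio, mem_Icc, mem_Ico]
        exact ⟨fun h => ⟨h.2.1, h.1⟩, fun h => ⟨h.2, h.1, h.2.le.trans ht.2⟩⟩

theorem lintegral_Ioc_ofReal_leftLim_sub (f : StieltjesFunction ℝ) {a p : ℝ} (hap : a ≤ p) :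
    ∫⁻ t in Ioc a p, ENNReal.ofReal (Function.leftLim f t - Function.leftLim f a)
      = ENNReal.ofReal (∫ t in a..p, (f t - Function.leftLim f a)) := by
  have hint : IntegrableOn (fun t => f t - Function.leftLim f a) (Ioc a p) :=
    (f.mono.intervalIntegrable.sub intervalIntegrable_const).1
  have hnonneg : 0 ≤ᵐ[volume.restrict (Ioc a p)] fun t => f t - Function.leftLim f a :=
    (ae_restrict_iff' measurableSet_Ioc).mpr <| .of_forall fun t ht =>
      sub_nonneg.mpr ((f.mono.leftLim_le le_rfl).trans (f.mono ht.1.le))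
  rw [intervalIntegral.integral_of_le hap, ofReal_integral_eq_lintegral_ofReal hint hnonneg]
  exact lintegral_congr_ae <| ae_restrict_of_ae <|
    f.leftLim_ae_eq.mono fun t ht => by simp only [ht]

end StieltjesFunction

theorem muSigma_Icc (f : StieltjesFunction ℝ) (h0 : Function.leftLim f 0 = f 0)
    (h_nonneg : 0 ≤ f 0) {p : ℝ} (hp0 : 0 ≤ p) (hp1 : p ≤ 1) :
    muSigma f (Icc 0 p) = ENNReal.ofReal ((1 - p) * f p + ∫ α in (0:ℝ)..p, f α) := by
  have hsplit : ∀ α ∈ Icc (0:ℝ) p,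
      ENNReal.ofReal (1 - α) = ENNReal.ofReal (1 - p) + ENNReal.ofReal (p - α) := fun α hα => by
    rw [← ENNReal.ofReal_add (by linarith) (by linarith [hα.2])]
    congr 1
    ring
  have hjump : 0 ≤ (1 - p) * (f p - f 0) := mul_nonneg (by linarith) (by linarith [f.mono hp0])
  have hint : 0 ≤ ∫ t in (0:ℝ)..p, (f t - f 0) :=
    intervalIntegral.integral_nonneg hp0 fun t ht => sub_nonneg.mpr (f.mono ht.1)
  calc muSigma f (Icc 0 p)
      = ENNReal.ofReal (f 0) + ∫⁻ α in Icc 0 p, ENNReal.ofReal (1 - α) ∂f.measure := by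
        rw [muSigma, Measure.add_apply, Measure.smul_apply, smul_eq_mul,
          Measure.dirac_apply_of_mem (left_mem_Icc.mpr hp0), mul_one,
          withDensity_apply _ measurableSet_Icc, Measure.restrict_restrict measurableSet_Icc,
          inter_eq_left.mpr (Icc_subset_Icc_right hp1)]
    _ = ENNReal.ofReal (f 0) + (ENNReal.ofReal (1 - p) * f.measure (Icc 0 p)
          + ∫⁻ α in Icc 0 p, ENNReal.ofReal (p - α) ∂f.measure) := by
        rw [setLIntegral_congr_fun measurableSet_Icc hsplit, lintegral_add_left measurable_const,
          setLIntegral_const]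
    _ = ENNReal.ofReal (f 0) + (ENNReal.ofReal ((1 - p) * (f p - f 0))
          + ENNReal.ofReal (∫ t in (0:ℝ)..p, (f t - f 0))) := by
        rw [f.measure_Icc, f.lintegral_Icc_ofReal_sub, f.lintegral_Ioc_ofReal_leftLim_sub hp0, h0,
          ENNReal.ofReal_mul (by linarith)]
    _ = ENNReal.ofReal ((1 - p) * f p + ∫ α in (0:ℝ)..p, f α) := by
        rw [← ENNReal.ofReal_add hjump hint, ← ENNReal.ofReal_add h_nonneg (add_nonneg hjump hint),
          intervalIntegral.integral_sub f.mono.intervalIntegrable intervalIntegrable_const,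
          intervalIntegral.integral_const, smul_eq_mul]
        congr 1
        ring

theorem muSigma_univ (f : StieltjesFunction ℝ) : muSigma f univ = muSigma f (Icc 0 1) := by
  rw [muSigma, Measure.add_apply, Measure.add_apply, Measure.smul_apply, Measure.smul_apply,
    Measure.dirac_apply_of_mem (mem_univ 0), Measure.dirac_apply_of_mem (left_mem_Icc.mpr zero_le_one),
    withDensity_apply _ MeasurableSet.univ, withDensity_apply _ measurableSet_Icc,
    Measure.restrict_univ, Measure.restrict_restrict measurableSet_Icc, inter_self]

theorem statement_4_general (f : StieltjesFunction ℝ)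
    (h_left : ∀ x : ℝ, x ≤ 0 → f x = f 0)
    (h_nonneg : 0 ≤ f 0)
    (h_int : ∫ u in (0:ℝ)..1, f u = 1) :
    IsProbabilityMeasure (muSigma f) ∧
      ∀ p ∈ Icc (0:ℝ) 1,
        ((muSigma f) (Icc (0:ℝ) p)).toReal = (1 - p) * f p + ∫ α in (0:ℝ)..p, f α := by
  have h0 := f.leftLim_eq_self_of_forall_le_eq h_left
  refine ⟨⟨?_⟩, fun p hp => ?_⟩
  · rw [muSigma_univ, muSigma_Icc f h0 h_nonneg zero_le_one le_rfl, h_int]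
    norm_num
  · have hmass : 0 ≤ (1 - p) * f p + ∫ α in (0:ℝ)..p, f α :=
      add_nonneg (mul_nonneg (sub_nonneg.mpr hp.2) (h_nonneg.trans (f.mono hp.1)))
        (intervalIntegral.integral_nonneg hp.1 fun t ht => h_nonneg.trans (f.mono ht.1))
    rw [muSigma_Icc f h0 h_nonneg hp.1 hp.2, ENNReal.toReal_ofReal hmass]

/-- for a bounded, right-continuous distortion `σ` (a Stieltjes function which
is constant outside `[0,1]`, nonnegative, with `∫₀¹ σ = 1`), the measure
`μ_σ(A) = σ(0)·δ₀(A) + ∫_A (1−α) dσ(α)` is a probability measure whose cumulative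
distribution function is `μ_σ([0,p]) = (1−p)σ(p) + ∫₀^p σ(α) dα` for all `p ∈ [0,1]`. -/
theorem statement_4 (f : StieltjesFunction ℝ)
    (h_left : ∀ x : ℝ, x ≤ 0 → f x = f 0)
    (h_right : ∀ x : ℝ, 1 ≤ x → f x = f 1)
    (h_nonneg : 0 ≤ f 0)
    (h_int : ∫ u in (0:ℝ)..1, f u = 1) :
    IsProbabilityMeasure (muSigma f) ∧
      ∀ p ∈ Icc (0:ℝ) 1,
        ((muSigma f) (Icc (0:ℝ) p)).toReal = (1 - p) * f p + ∫ α in (0:ℝ)..p, f α :=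
  statement_4_general f h_left h_nonneg h_int
end

section
/- Let σ be a bounded, right-continuous distortion and L an essentially bounded real random variable. Then the Kusuoka-type representation ∫_{[0,1]} CTE_α(L) μ_σ(dα) = π_σ(L) holds, where μ_σ(A) := σ(0)·δ₀(A) + ∫_A (1−α) dσ(α). -/
open MeasureTheory Set
open scoped ENNReal

/-- The σ-distorted premium `π_σ(L) = ∫₀¹ F_L⁻¹(u) σ(u) du`. -/
noncomputable def distortedPremium {Ω : Type*} [MeasurableSpace Ω] (P : Measure Ω)
    (L : Ω → ℝ) (σ : ℝ → ℝ) : ℝ :=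
  ∫ u in (0:ℝ)..1, quantileRV P L u * σ u

/-- The conditional tail expectation `CTE_α(L) = (1−α)⁻¹ ∫_α¹ F_L⁻¹(p) dp`. -/
noncomputable def CTE {Ω : Type*} [MeasurableSpace Ω] (P : Measure Ω) (L : Ω → ℝ)
    (α : ℝ) : ℝ :=
  (1 - α)⁻¹ * ∫ p in α..1, quantileRV P L p

/-!
With `q = F_L⁻¹`, which is bounded and monotone on `(0, 1]`, we have `(1 - α) CTE_α(L) = ∫_α¹ q`,
so the density `1 - α` of `μ_σ` cancels the normalisation of `CTE_α`. By Fubini,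
`∫_{[0,1]} (∫_α¹ q) dσ(α) = ∫₀¹ q(p) dσ([0, p]) dp = ∫₀¹ q(p) (σ(p) - σ(0)) dp`, and the Dirac mass
`σ(0) δ₀` contributes the missing `σ(0) ∫₀¹ q`.
-/

namespace StieltjesFunction

open Function

variable (f : StieltjesFunction ℝ)

theorem setIntegral_intervalIntegral_eq {a b : ℝ} {q : ℝ → ℝ} (hq : IntegrableOn q (Icc a b)) :
    ∫ α in Icc a b, (∫ p in α..b, q p) ∂f.measure
      = ∫ p in Icc a b, (f p - leftLim f a) * q p := by
  have : IsFiniteMeasure (f.measure.restrict (Icc a b)) :=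
    isFiniteMeasure_restrict.2 measure_Icc_lt_top.ne
  set S : Set (ℝ × ℝ) := {z | z.1 ≤ z.2}
  have fubini := integral_integral_swap (f := fun α p => S.indicator (fun z => q z.2) (α, p))
    (μ := f.measure.restrict (Icc a b)) (ν := volume.restrict (Icc a b))
    ((hq.comp_snd _).indicator (measurableSet_le measurable_fst measurable_snd))
  have inner_vol : ∀ α ∈ Icc a b,
      ∫ p in Icc a b, S.indicator (fun z => q z.2) (α, p) = ∫ p in α..b, q p := by
    intro α hα
    have hind : ∀ p, S.indicator (fun z => q z.2) (α, p) = (Ici α).indicator q p := fun p => by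
      simp only [S, indicator_apply, mem_ofPred_eq, mem_Ici]
    have hset : Icc a b ∩ Ici α = Icc α b := by
      ext x
      simp only [mem_inter_iff, mem_Icc, mem_Ici]
      exact ⟨fun ⟨⟨_, hxb⟩, hαx⟩ => ⟨hαx, hxb⟩, fun ⟨hαx, hxb⟩ => ⟨⟨hα.1.trans hαx, hxb⟩, hαx⟩⟩
    simp only [hind]
    rw [setIntegral_indicator measurableSet_Ici, hset, integral_Icc_eq_integral_Ioc,
      intervalIntegral.integral_of_le hα.2]
  have inner_stieltjes : ∀ p ∈ Icc a b,
      ∫ α in Icc a b, S.indicator (fun z => q z.2) (α, p) ∂f.measure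
        = (f p - leftLim f a) * q p := by
    intro p hp
    have hind : ∀ α, S.indicator (fun z => q z.2) (α, p) = (Iic p).indicator (fun _ => q p) α :=
      fun α => by simp only [S, indicator_apply, mem_ofPred_eq, mem_Iic]
    have hset : Icc a b ∩ Iic p = Icc a p := by
      ext x
      simp only [mem_inter_iff, mem_Icc, mem_Iic]
      exact ⟨fun ⟨⟨hax, _⟩, hxp⟩ => ⟨hax, hxp⟩, fun ⟨hax, hxp⟩ => ⟨⟨hax, hxp.trans hp.2⟩, hxp⟩⟩
    simp only [hind]
    rw [setIntegral_indicator measurableSet_Iic, hset, setIntegral_const, measureReal_def,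
      measure_Icc, ENNReal.toReal_ofReal (sub_nonneg.2 (f.mono.leftLim_le hp.1)), smul_eq_mul]
  rw [← setIntegral_congr_fun measurableSet_Icc inner_vol, fubini,
    setIntegral_congr_fun measurableSet_Icc inner_stieltjes]

theorem intervalIntegral_mul_eq {a b : ℝ} (hab : a ≤ b) {q : ℝ → ℝ}
    (hq : IntervalIntegrable q volume a b) :
    ∫ p in a..b, q p * f p =
      leftLim f a * (∫ p in a..b, q p) + ∫ α in Icc a b, (∫ p in α..b, q p) ∂f.measure := by
  have hqI : IntegrableOn q (Icc a b) := (integrableOn_Icc_iff_integrableOn_Ioc).2 hq.1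
  have hqf : IntegrableOn (fun p => q p * f p) (Icc a b) := by
    refine hqI.mul_bdd f.mono.measurable.aestronglyMeasurable (c := max |f a| |f b|) ?_
    filter_upwards [ae_restrict_mem measurableSet_Icc] with p hp
    exact abs_le_max_abs_abs (f.mono hp.1) (f.mono hp.2)
  have hsplit : ∫ p in Icc a b, q p * f p
      = leftLim f a * (∫ p in Icc a b, q p) + ∫ p in Icc a b, (f p - leftLim f a) * q p := by
    rw [← integral_const_mul, ← integral_add (hqI.const_mul _)]
    · exact setIntegral_congr_fun measurableSet_Icc fun p _ => by ring
    · refine (hqf.sub (hqI.const_mul (leftLim f a))).congr_fun (fun p _ => ?_) measurableSet_Icc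
      simp only [Pi.sub_apply]
      ring
  simp only [intervalIntegral.integral_of_le hab, ← integral_Icc_eq_integral_Ioc]
  rw [hsplit, f.setIntegral_intervalIntegral_eq hqI]

theorem leftLim_eq_self_of_eq {x y : ℝ} (hyx : y < x) (h : f y = f x) : leftLim f x = f x :=
  le_antisymm (f.mono.leftLim_le le_rfl) (h ▸ f.mono.le_leftLim hyx)

end StieltjesFunction

theorem integral_muSigma {f : StieltjesFunction ℝ} (hf0 : 0 ≤ f 0) {g : ℝ → ℝ}
    (hg : IntegrableOn (fun α => (1 - α) * g α) (Icc 0 1) f.measure) :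
    ∫ α, g α ∂muSigma f = f 0 * g 0 + ∫ α in Icc 0 1, (1 - α) * g α ∂f.measure := by
  have hdens : Measurable fun α : ℝ => ENNReal.ofReal (1 - α) := by fun_prop
  have hdens_lt_top : ∀ᵐ α ∂f.measure.restrict (Icc 0 1), ENNReal.ofReal (1 - α) < ∞ :=
    ae_of_all _ fun _ => ENNReal.ofReal_lt_top
  have hsmul : (fun α => (ENNReal.ofReal (1 - α)).toReal • g α)
      =ᵐ[f.measure.restrict (Icc 0 1)] fun α => (1 - α) * g α := by
    filter_upwards [ae_restrict_mem measurableSet_Icc] with α hα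
    rw [ENNReal.toReal_ofReal (sub_nonneg.2 hα.2), smul_eq_mul]
  have hg_dirac : Integrable g (ENNReal.ofReal (f 0) • Measure.dirac 0) :=
    (integrable_dirac (by simp)).smul_measure ENNReal.ofReal_ne_top
  have hg_dens : Integrable g
      ((f.measure.restrict (Icc 0 1)).withDensity fun α => ENNReal.ofReal (1 - α)) :=
    (integrable_withDensity_iff_integrable_smul' hdens hdens_lt_top).2 (hg.congr hsmul.symm)
  rw [muSigma, integral_add_measure hg_dirac hg_dens, integral_smul_measure, integral_dirac,
    ENNReal.toReal_ofReal hf0, smul_eq_mul,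
    integral_withDensity_eq_integral_toReal_smul hdens hdens_lt_top, integral_congr_ae hsmul]

theorem one_sub_mul_CTE {Ω : Type*} [MeasurableSpace Ω] (P : Measure Ω) (L : Ω → ℝ) (α : ℝ) :
    (1 - α) * CTE P L α = ∫ p in α..1, quantileRV P L p := by
  rcases eq_or_ne α 1 with rfl | hα
  · simp
  · rw [CTE, mul_inv_cancel_left₀ (sub_ne_zero.2 hα.symm)]

section Quantile

variable {Ω : Type*} [MeasurableSpace Ω] {P : Measure Ω} {L : Ω → ℝ} {c C : ℝ}

theorem cdfRV_eq_one_of_le [IsProbabilityMeasure P] (hC : ∀ᵐ ω ∂P, L ω ≤ C) {x : ℝ}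
    (hx : C ≤ x) : cdfRV P L x = 1 := by
  have : {ω | L ω ≤ x} =ᵐ[P] (univ : Set Ω) := by
    rw [Filter.eventuallyEq_univ]
    filter_upwards [hC] with ω hω using hω.trans hx
  rw [cdfRV, measure_congr this, measure_univ, ENNReal.toReal_one]

theorem cdfRV_eq_zero_of_lt (hc : ∀ᵐ ω ∂P, c ≤ L ω) {x : ℝ} (hx : x < c) : cdfRV P L x = 0 := by
  have : P {ω | L ω ≤ x} = 0 := by
    rw [measure_eq_zero_iff_ae_notMem]
    filter_upwards [hc] with ω hω using not_le.2 (hx.trans_le hω)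
  rw [cdfRV, this, ENNReal.toReal_zero]

theorem mem_lowerBounds_setOf_le_cdfRV (hc : ∀ᵐ ω ∂P, c ≤ L ω) {u : ℝ} (hu : 0 < u) :
    c ∈ lowerBounds {x | u ≤ cdfRV P L x} := by
  intro x hx
  by_contra! hxc
  have : u ≤ 0 := (cdfRV_eq_zero_of_lt hc hxc) ▸ hx
  linarith

theorem mem_setOf_le_cdfRV [IsProbabilityMeasure P] (hC : ∀ᵐ ω ∂P, L ω ≤ C) {u : ℝ}
    (hu : u ≤ 1) : C ∈ {x | u ≤ cdfRV P L x} := by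
  rwa [mem_ofPred_eq, cdfRV_eq_one_of_le hC le_rfl]

theorem quantileRV_mem_Icc [IsProbabilityMeasure P] (hc : ∀ᵐ ω ∂P, c ≤ L ω)
    (hC : ∀ᵐ ω ∂P, L ω ≤ C) {u : ℝ} (hu : u ∈ Ioc 0 1) : quantileRV P L u ∈ Icc c C :=
  ⟨le_csInf ⟨C, mem_setOf_le_cdfRV hC hu.2⟩ (mem_lowerBounds_setOf_le_cdfRV hc hu.1),
    csInf_le ⟨c, mem_lowerBounds_setOf_le_cdfRV hc hu.1⟩ (mem_setOf_le_cdfRV hC hu.2)⟩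

theorem monotoneOn_quantileRV [IsProbabilityMeasure P] (hc : ∀ᵐ ω ∂P, c ≤ L ω)
    (hC : ∀ᵐ ω ∂P, L ω ≤ C) : MonotoneOn (quantileRV P L) (Ioc 0 1) :=
  fun _ hu _ hv huv => csInf_le_csInf ⟨c, mem_lowerBounds_setOf_le_cdfRV hc hu.1⟩
    ⟨C, mem_setOf_le_cdfRV hC hv.2⟩ fun _ hx => huv.trans hx

theorem intervalIntegrable_quantileRV [IsProbabilityMeasure P] (hL : MemLp L ⊤ P) :
    IntervalIntegrable (quantileRV P L) volume 0 1 := by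
  have hbound := ae_le_lpNorm_exponent_top hL
  have hc : ∀ᵐ ω ∂P, -lpNorm L ⊤ P ≤ L ω := hbound.mono fun _ h => (abs_le.1 h).1
  have hC : ∀ᵐ ω ∂P, L ω ≤ lpNorm L ⊤ P := hbound.mono fun _ h => (abs_le.1 h).2
  refine (intervalIntegrable_iff_integrableOn_Ioc_of_le zero_le_one).2 ?_
  refine Integrable.of_bound (aemeasurable_restrict_of_monotoneOn measurableSet_Ioc
    (monotoneOn_quantileRV hc hC)).aestronglyMeasurable (lpNorm L ⊤ P) ?_
  filter_upwards [ae_restrict_mem measurableSet_Ioc] with u hu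
  exact abs_le.2 (quantileRV_mem_Icc hc hC hu)

end Quantile

theorem statement_5_general {Ω : Type*} [MeasurableSpace Ω] (P : Measure Ω) [IsProbabilityMeasure P]
    (L : Ω → ℝ) (hLbdd : MemLp L ⊤ P)
    (f : StieltjesFunction ℝ)
    (h_left : ∀ x : ℝ, x ≤ 0 → f x = f 0)
    (h_nonneg : 0 ≤ f 0) :
    ∫ α, CTE P L α ∂(muSigma f) = distortedPremium P L f := by
  have hQ := intervalIntegrable_quantileRV hLbdd
  have hprimitive : ContinuousOn (fun α => ∫ p in α..1, quantileRV P L p) (Icc 0 1) := by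
    rw [← uIcc_of_le zero_le_one]
    exact intervalIntegral.continuousOn_primitive_interval_left ((intervalIntegrable_iff').1 hQ)
  have hint : IntegrableOn (fun α => (1 - α) * CTE P L α) (Icc 0 1) f.measure := by
    simpa only [one_sub_mul_CTE] using hprimitive.integrableOn_compact isCompact_Icc
  have hleft : Function.leftLim f 0 = f 0 :=
    f.leftLim_eq_self_of_eq neg_one_lt_zero (h_left _ (by norm_num))
  rw [integral_muSigma h_nonneg hint, distortedPremium, f.intervalIntegral_mul_eq zero_le_one hQ,
    hleft]
  simp only [one_sub_mul_CTE]
  rw [CTE, sub_zero, inv_one, one_mul]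

/-- for a bounded, right-continuous distortion `σ` and an essentially bounded
random variable `L`, the Kusuoka-type representation `∫ CTE_α(L) μ_σ(dα) = π_σ(L)` holds. -/
theorem statement_5 {Ω : Type*} [MeasurableSpace Ω] (P : Measure Ω) [IsProbabilityMeasure P]
    (L : Ω → ℝ) (hL : Measurable L) (hLbdd : MemLp L ⊤ P)
    (f : StieltjesFunction ℝ)
    (h_left : ∀ x : ℝ, x ≤ 0 → f x = f 0)
    (h_right : ∀ x : ℝ, 1 ≤ x → f x = f 1)
    (h_nonneg : 0 ≤ f 0)
    (h_int : ∫ u in (0:ℝ)..1, f u = 1) :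
    ∫ α, CTE P L α ∂(muSigma f) = distortedPremium P L f :=
  statement_5_general P L hLbdd f h_left h_nonneg
end

section
/- Let (Ω, F, P) be an atomless probability space, α ∈ [0,1), and L an essentially bounded real random variable. Then CTE_α(L) = sup{ E[L·Z] : Z integrable, E[Z] = 1, Z ≥ 0 almost surely, and (1−α)·Z ≤ 1 almost surely }. -/
open MeasureTheory Set
open scoped ENNReal

/-- A probability measure is atomless if every set of positive measure contains a measurable
subset of strictly smaller positive measure. -/
def AtomlessMeasure {Ω : Type*} [MeasurableSpace Ω] (P : Measure Ω) : Prop :=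
  ∀ A : Set Ω, MeasurableSet A → 0 < P A →
    ∃ B ⊆ A, MeasurableSet B ∧ 0 < P B ∧ P B < P A

/-!
Let `q` be an `α`-quantile of `L`: `P(L < q) ≤ α ≤ P(L ≤ q)`. The quantile function, viewed as a
random variable on `((0,1), dp)`, has the law of `L`; it lies below `q` on `(0, α]` and above `q`
on `(α, 1)`. Hence `∫_α¹ (F_L⁻¹(p) - q) dp = E[(L - q)⁺]`, i.e.
`CTE_α(L) = q + (1-α)⁻¹ E[(L - q)⁺]`.

For an admissible density `Z` we have `E[LZ] = q + E[(L - q)Z]` and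
`(L - q)Z ≤ (1-α)⁻¹ (L - q)⁺` pointwise, so `E[LZ] ≤ CTE_α(L)`. Equality holds for
`Z = (1-α)⁻¹ (1_{L > q} + t 1_{L = q})`, where `t ∈ [0,1]` with
`P(L > q) + t P(L = q) = 1 - α` exists precisely because `q` is an `α`-quantile.
-/

open ProbabilityTheory Filter Topology

def IsQuantile {Ω : Type*} [MeasurableSpace Ω] (P : Measure Ω) (L : Ω → ℝ) (α q : ℝ) : Prop :=
  P.real {ω | L ω < q} ≤ α ∧ α ≤ cdfRV P L q

section Quantile

variable {Ω : Type*} [MeasurableSpace Ω] {P : Measure Ω} [IsProbabilityMeasure P] {L : Ω → ℝ}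

lemma cdfRV_eq_cdf_map_s12 (hL : AEMeasurable L P) : cdfRV P L = cdf (P.map L) := by
  have := Measure.isProbabilityMeasure_map hL
  ext x
  rw [cdf_eq_real, map_measureReal_apply_of_aemeasurable hL measurableSet_Iic]
  rfl

lemma monotone_cdfRV (hL : AEMeasurable L P) : Monotone (cdfRV P L) := by
  rw [cdfRV_eq_cdf_map_s12 hL]
  exact monotone_cdf _

lemma le_cdfRV_csInf (hL : AEMeasurable L P) {S : Set ℝ} {r : ℝ} (hne : S.Nonempty)
    (hS : ∀ x ∈ S, r ≤ cdfRV P L x) : r ≤ cdfRV P L (sInf S) := by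
  have hcont : Tendsto (cdfRV P L) (𝓝[>] sInf S) (𝓝 (cdfRV P L (sInf S))) := by
    rw [cdfRV_eq_cdf_map_s12 hL]
    exact ((cdf (P.map L)).right_continuous _).mono Ioi_subset_Ici_self
  refine ge_of_tendsto hcont (eventually_nhdsWithin_of_forall fun y hy => ?_)
  obtain ⟨x, hxS, hxy⟩ := exists_lt_of_csInf_lt hne hy
  exact (hS x hxS).trans (monotone_cdfRV hL hxy.le)

lemma quantileRV_le_iff_s12 (hL : AEMeasurable L P) {p x : ℝ} (hp : p ∈ Ioo 0 1) :
    quantileRV P L p ≤ x ↔ p ≤ cdfRV P L x := by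
  have hne : {y | p ≤ cdfRV P L y}.Nonempty := by
    rw [cdfRV_eq_cdf_map_s12 hL]
    obtain ⟨y, hy⟩ := ((tendsto_cdf_atTop (P.map L)).eventually (lt_mem_nhds hp.2)).exists
    exact ⟨y, hy.le⟩
  have hbdd : BddBelow {y | p ≤ cdfRV P L y} := by
    obtain ⟨y₀, hy₀⟩ := eventually_atBot.1
      ((tendsto_cdf_atBot (P.map L)).eventually (gt_mem_nhds hp.1))
    refine ⟨y₀, fun y hy => le_of_not_gt fun hlt => ?_⟩
    have := hy₀ y hlt.le
    rw [mem_ofPred_eq, cdfRV_eq_cdf_map_s12 hL] at hy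
    linarith
  constructor
  · intro h
    exact (le_cdfRV_csInf hL hne fun _ hy => hy).trans (monotone_cdfRV hL h)
  · exact csInf_le hbdd

lemma monotoneOn_quantileRV_s12 (hL : AEMeasurable L P) : MonotoneOn (quantileRV P L) (Ioo 0 1) :=
  fun _ hp _ hp' hpp' => (quantileRV_le_iff_s12 hL hp).2 <|
    hpp'.trans ((quantileRV_le_iff_s12 hL hp').1 le_rfl)

lemma aemeasurable_quantileRV (hL : AEMeasurable L P) :
    AEMeasurable (quantileRV P L) (volume.restrict (Ioo 0 1)) :=
  aemeasurable_restrict_of_monotoneOn measurableSet_Ioo (monotoneOn_quantileRV_s12 hL)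

lemma map_quantileRV_volume (hL : AEMeasurable L P) :
    (volume.restrict (Ioo 0 1)).map (quantileRV P L) = P.map L := by
  have := Measure.isProbabilityMeasure_map hL
  refine Measure.ext_of_Iic _ _ fun x => ?_
  have hF := cdfRV_eq_cdf_map_s12 hL
  have hset : quantileRV P L ⁻¹' Iic x ∩ Ioo 0 1 = Iic (cdfRV P L x) ∩ Ioo 0 1 := by
    ext p
    simp only [mem_inter_iff, mem_preimage, mem_Iic]
    exact and_congr_left (quantileRV_le_iff_s12 hL)
  have hvol : volume (Iic (cdfRV P L x) ∩ Ioo 0 1) = ENNReal.ofReal (cdfRV P L x) := by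
    have h1 : cdfRV P L x ≤ 1 := hF ▸ cdf_le_one _ x
    refine le_antisymm ?_ ?_
    · calc volume (Iic (cdfRV P L x) ∩ Ioo 0 1) ≤ volume (Ioc 0 (cdfRV P L x)) :=
            measure_mono fun p hp => ⟨hp.2.1, hp.1⟩
        _ = _ := by rw [Real.volume_Ioc, sub_zero]
    · calc ENNReal.ofReal (cdfRV P L x) = volume (Ioo 0 (cdfRV P L x)) := by
            rw [Real.volume_Ioo, sub_zero]
        _ ≤ volume (Iic (cdfRV P L x) ∩ Ioo 0 1) :=
            measure_mono fun p hp => ⟨hp.2.le, hp.1, hp.2.trans_le h1⟩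
  rw [Measure.map_apply_of_aemeasurable (aemeasurable_quantileRV hL) measurableSet_Iic,
    Measure.restrict_apply' measurableSet_Ioo, hset, hvol, hF, ofReal_cdf]

lemma integrableOn_quantileRV (hL : AEMeasurable L P) (hint : Integrable L P) :
    IntegrableOn (quantileRV P L) (Ioo 0 1) := by
  have hQ := aemeasurable_quantileRV hL
  have hid : Integrable id (P.map L) :=
    (integrable_map_measure aestronglyMeasurable_id hL).2 hint
  rw [← map_quantileRV_volume hL] at hid
  exact (integrable_map_measure aestronglyMeasurable_id hQ).1 hid

lemma integral_comp_quantileRV (hL : AEMeasurable L P) {f : ℝ → ℝ} (hf : Measurable f) :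
    ∫ p in Ioo 0 1, f (quantileRV P L p) = ∫ ω, f (L ω) ∂P := by
  have hQ := aemeasurable_quantileRV hL
  rw [← integral_map hQ hf.aestronglyMeasurable, map_quantileRV_volume hL,
    integral_map hL hf.aestronglyMeasurable]

lemma measureReal_lt_eq_leftLim (hL : AEMeasurable L P) (x : ℝ) :
    P.real {ω | L ω < x} = Function.leftLim (cdfRV P L) x := by
  have := Measure.isProbabilityMeasure_map hL
  have h := (cdf (P.map L)).measure_Iio (tendsto_cdf_atBot _) x
  rw [measure_cdf, sub_zero] at h
  have hnn : 0 ≤ Function.leftLim (cdf (P.map L)) x :=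
    le_trans (cdf_nonneg _ (x - 1)) ((monotone_cdf _).le_leftLim (sub_one_lt x))
  change P.real (L ⁻¹' Iio x) = _
  rw [← map_measureReal_apply_of_aemeasurable hL measurableSet_Iio, measureReal_def, h,
    ENNReal.toReal_ofReal hnn, cdfRV_eq_cdf_map_s12 hL]

lemma exists_isQuantile (hL : AEMeasurable L P) {α C : ℝ} (hα : α ∈ Ico 0 1)
    (hC : ∀ᵐ ω ∂P, C ≤ L ω) : ∃ q, IsQuantile P L α q := by
  have hne : {x | α < cdfRV P L x}.Nonempty := by
    rw [cdfRV_eq_cdf_map_s12 hL]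
    exact ((tendsto_cdf_atTop (P.map L)).eventually (lt_mem_nhds hα.2)).exists
  set S := {x | α < cdfRV P L x}
  have hbdd : BddBelow S := by
    refine ⟨C, fun x hx => le_of_not_gt fun hxC => ?_⟩
    have hnull : P {ω | L ω ≤ x} = 0 :=
      measure_mono_null (fun ω hω => not_le.2 (lt_of_le_of_lt hω hxC)) (ae_iff.1 hC)
    have : cdfRV P L x = 0 := by rw [cdfRV, hnull, ENNReal.toReal_zero]
    exact absurd hx (by rw [mem_ofPred_eq, this]; exact not_lt.2 hα.1)
  refine ⟨sInf S, ?_, le_cdfRV_csInf hL hne fun x hx => le_of_lt hx⟩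
  rw [measureReal_lt_eq_leftLim hL]
  refine le_of_tendsto ((monotone_cdfRV hL).tendsto_leftLim _)
    (eventually_nhdsWithin_of_forall fun x hx => ?_)
  exact le_of_not_gt fun hαx => not_le.2 hx (csInf_le hbdd hαx)

lemma IsQuantile.max_quantileRV_sub_eq_indicator (hL : AEMeasurable L P) {α q p : ℝ}
    (hq : IsQuantile P L α q) (hp : p ∈ Ioo 0 1) :
    max (quantileRV P L p - q) 0 = (Ioi α).indicator (fun p => quantileRV P L p - q) p := by
  by_cases hαp : α < p
  · rw [indicator_of_mem (mem_Ioi.2 hαp),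
      max_eq_left (sub_nonneg.2 (le_of_not_gt fun hlt => ?_))]
    have h₁ : p ≤ P.real {ω | L ω ≤ quantileRV P L p} := (quantileRV_le_iff_s12 hL hp).1 le_rfl
    have h₂ : P.real {ω | L ω ≤ quantileRV P L p} ≤ P.real {ω | L ω < q} :=
      measureReal_mono fun ω hω => lt_of_le_of_lt hω hlt
    linarith [hq.1]
  · rw [indicator_of_notMem (mt mem_Ioi.1 hαp),
      max_eq_right (sub_nonpos.2 ((quantileRV_le_iff_s12 hL hp).2 ?_))]
    linarith [hq.2]

theorem IsQuantile.intervalIntegral_quantileRV_eq (hL : AEMeasurable L P) (hint : Integrable L P)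
    {α q : ℝ} (hα : α ∈ Icc 0 1) (hq : IsQuantile P L α q) :
    ∫ p in α..1, quantileRV P L p = (1 - α) * q + ∫ ω, max (L ω - q) 0 ∂P := by
  have hQ : IntegrableOn (quantileRV P L) (Ioo α 1) :=
    (integrableOn_quantileRV hL hint).mono_set (Ioo_subset_Ioo_left hα.1)
  calc ∫ p in α..1, quantileRV P L p
      = ∫ p in Ioo α 1, quantileRV P L p := by
        rw [intervalIntegral.integral_of_le hα.2, integral_Ioc_eq_integral_Ioo]
    _ = (1 - α) * q + ∫ p in Ioo α 1, (quantileRV P L p - q) := by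
        rw [integral_sub hQ (integrableOn_const (by simp)), setIntegral_const,
          Real.volume_real_Ioo_of_le hα.2, smul_eq_mul]
        ring
    _ = (1 - α) * q + ∫ p in Ioo 0 1, (Ioi α).indicator (fun p => quantileRV P L p - q) p := by
        rw [integral_indicator measurableSet_Ioi, Measure.restrict_restrict measurableSet_Ioi,
          Ioi_inter_Ioo, max_eq_left hα.1]
    _ = (1 - α) * q + ∫ p in Ioo 0 1, max (quantileRV P L p - q) 0 := by
        congr 1
        exact setIntegral_congr_fun measurableSet_Ioo fun p hp =>
          (hq.max_quantileRV_sub_eq_indicator hL hp).symm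
    _ = (1 - α) * q + ∫ ω, max (L ω - q) 0 ∂P := by
        rw [integral_comp_quantileRV hL (f := fun x => max (x - q) 0) (by fun_prop)]

lemma IsQuantile.exists_mem_Icc_add_mul_eq (hL : Measurable L) {α q : ℝ}
    (hq : IsQuantile P L α q) :
    ∃ t ∈ Icc (0:ℝ) 1, P.real {ω | q < L ω} + t * P.real {ω | L ω = q} = 1 - α := by
  have hA : P.real {ω | q < L ω} = 1 - P.real {ω | L ω ≤ q} := by
    rw [← probReal_compl_eq_one_sub (measurableSet_le hL measurable_const)]
    congr 1; ext ω; simp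
  have hAB : P.real {ω | q < L ω} + P.real {ω | L ω = q} = 1 - P.real {ω | L ω < q} := by
    rw [← measureReal_union (disjoint_left.2 fun ω hlt heq => ?_)
      (measurableSet_eq_fun hL measurable_const),
      ← probReal_compl_eq_one_sub (measurableSet_lt hL measurable_const)]
    · congr 1; ext ω; simp [le_iff_lt_or_eq, eq_comm]
    · exact (ne_of_gt hlt) heq
  have hF : cdfRV P L q = P.real {ω | L ω ≤ q} := rfl
  exact intermediate_value_Icc zero_le_one
    (by fun_prop : Continuous fun t => P.real {ω | q < L ω} + t * P.real {ω | L ω = q}).continuousOn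
    ⟨by simp; linarith [hq.2], by simp; linarith [hq.1]⟩

lemma IsQuantile.exists_density_sub_mul_eq_posPart (hL : Measurable L) {α q : ℝ} (hα : α < 1)
    (hq : IsQuantile P L α q) :
    ∃ Z : Ω → ℝ, Integrable Z P ∧ ∫ ω, Z ω ∂P = 1 ∧ (∀ ω, 0 ≤ Z ω) ∧
      (∀ ω, (1 - α) * Z ω ≤ 1) ∧ ∀ ω, (L ω - q) * Z ω = (1 - α)⁻¹ * max (L ω - q) 0 := by
  set A := {ω | q < L ω}
  set B := {ω | L ω = q}
  have hA : MeasurableSet A := measurableSet_lt measurable_const hL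
  have hB : MeasurableSet B := measurableSet_eq_fun hL measurable_const
  obtain ⟨t, ⟨ht0, ht1⟩, ht⟩ := hq.exists_mem_Icc_add_mul_eq hL
  set w : Ω → ℝ := fun ω => A.indicator 1 ω + t * B.indicator 1 ω
  have hw : ∀ ω, 0 ≤ w ω ∧ w ω ≤ 1 ∧ (L ω - q) * w ω = max (L ω - q) 0 := by
    intro ω
    rcases lt_trichotomy (L ω) q with h | h | h
    · simp [w, A, B, h.not_gt, h.ne, h.le]
    · simp [w, A, B, h, ht0, ht1]
    · simp [w, A, B, h, h.ne', h.le]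
  have hA1 : Integrable (A.indicator 1) P := (integrable_const (1 : ℝ)).indicator hA
  have hB1 : Integrable (fun ω => t * B.indicator 1 ω) P :=
    ((integrable_const (1 : ℝ)).indicator hB).const_mul t
  have hwint : Integrable w P := hA1.add hB1
  have hw1 : ∫ ω, w ω ∂P = 1 - α := by
    rw [← ht, ← integral_indicator_one hA, ← integral_indicator_one hB, ← integral_const_mul,
      ← integral_add hA1 hB1]
  have hα' : 1 - α ≠ 0 := (sub_pos.2 hα).ne'
  refine ⟨fun ω => (1 - α)⁻¹ * w ω, hwint.const_mul _, ?_, fun ω => ?_, fun ω => ?_, fun ω => ?_⟩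
  · rw [integral_const_mul, hw1, inv_mul_cancel₀ hα']
  · exact mul_nonneg (inv_nonneg.2 (sub_pos.2 hα).le) (hw ω).1
  · rw [mul_inv_cancel_left₀ hα']
    exact (hw ω).2.1
  · rw [mul_left_comm, (hw ω).2.2]

end Quantile

lemma MeasureTheory.MemLp.exists_ae_abs_le {Ω : Type*} [MeasurableSpace Ω] {μ : Measure Ω}
    {f : Ω → ℝ} (hf : MemLp f ⊤ μ) : ∃ C, ∀ᵐ ω ∂μ, |f ω| ≤ C := by
  have hf' : eLpNormEssSup f μ < ⊤ := eLpNorm_exponent_top (f := f) ▸ hf.2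
  obtain ⟨C, hC⟩ := eLpNormEssSup_lt_top_iff_isBoundedUnder.1 hf'
  refine ⟨C, (eventually_map.1 hC).mono fun ω hω => ?_⟩
  rw [← Real.norm_eq_abs, ← coe_nnnorm]
  exact_mod_cast hω

section Density

variable {Ω : Type*} [MeasurableSpace Ω] {μ : Measure Ω} {L Z : Ω → ℝ}

lemma integral_mul_eq_add_integral_sub_mul (hLZ : Integrable (fun ω => L ω * Z ω) μ)
    (hZ : Integrable Z μ) (hZ1 : ∫ ω, Z ω ∂μ = 1) (q : ℝ) :
    ∫ ω, L ω * Z ω ∂μ = q + ∫ ω, (L ω - q) * Z ω ∂μ := by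
  simp_rw [sub_mul]
  rw [integral_sub hLZ (hZ.const_mul q), integral_const_mul, hZ1]
  ring

lemma integral_mul_le_add_mul_integral_posPart [IsFiniteMeasure μ] {c : ℝ} (hL : Integrable L μ)
    (hZ : Integrable Z μ) (hZ1 : ∫ ω, Z ω ∂μ = 1) (hZ0 : ∀ᵐ ω ∂μ, 0 ≤ Z ω)
    (hZc : ∀ᵐ ω ∂μ, Z ω ≤ c) (q : ℝ) :
    ∫ ω, L ω * Z ω ∂μ ≤ q + c * ∫ ω, max (L ω - q) 0 ∂μ := by
  have hbdd : ∀ᵐ ω ∂μ, ‖Z ω‖ ≤ c := by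
    filter_upwards [hZ0, hZc] with ω h0 hc
    rwa [Real.norm_eq_abs, abs_of_nonneg h0]
  have hLZ : Integrable (fun ω => L ω * Z ω) μ := hL.mul_bdd hZ.aestronglyMeasurable hbdd
  have hpw : ∀ᵐ ω ∂μ, (L ω - q) * Z ω ≤ c * max (L ω - q) 0 := by
    filter_upwards [hZ0, hZc] with ω h0 hc
    rcases le_total (L ω - q) 0 with h | h
    · rw [max_eq_right h, mul_zero]
      exact mul_nonpos_of_nonpos_of_nonneg h h0
    · rw [max_eq_left h, mul_comm c]
      exact mul_le_mul_of_nonneg_left hc h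
  rw [integral_mul_eq_add_integral_sub_mul hLZ hZ hZ1 q, ← integral_const_mul]
  gcongr q + ?_
  exact integral_mono_ae ((hL.sub (integrable_const q)).mul_bdd hZ.aestronglyMeasurable hbdd)
    (((hL.sub (integrable_const q)).pos_part).const_mul c) hpw

end Density

theorem statement_12_general {Ω : Type*} [MeasurableSpace Ω] (P : Measure Ω) [IsProbabilityMeasure P]
    (α : ℝ) (hα : α ∈ Ico (0:ℝ) 1)
    (L : Ω → ℝ) (hL : Measurable L) (hLbdd : MemLp L ⊤ P) :
    IsLUB {r : ℝ | ∃ Z : Ω → ℝ, Integrable Z P ∧ (∫ ω, Z ω ∂P) = 1 ∧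
        (∀ᵐ ω ∂P, 0 ≤ Z ω) ∧ (∀ᵐ ω ∂P, (1 - α) * Z ω ≤ 1) ∧
        r = ∫ ω, L ω * Z ω ∂P}
      (CTE P L α) := by
  have hint : Integrable L P := hLbdd.integrable le_top
  have hα' : 0 < 1 - α := sub_pos.2 hα.2
  obtain ⟨C, hC⟩ := hLbdd.exists_ae_abs_le
  obtain ⟨q, hq⟩ := exists_isQuantile hL.aemeasurable hα (hC.mono fun ω hω => (abs_le.1 hω).1)
  have hCTE : CTE P L α = q + (1 - α)⁻¹ * ∫ ω, max (L ω - q) 0 ∂P := by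
    rw [CTE, hq.intervalIntegral_quantileRV_eq hL.aemeasurable hint (Ico_subset_Icc_self hα),
      mul_add, inv_mul_cancel_left₀ hα'.ne']
  refine IsGreatest.isLUB ⟨?_, ?_⟩
  · obtain ⟨Z, hZ, hZ1, hZ0, hZα, hLZ⟩ := hq.exists_density_sub_mul_eq_posPart hL hα.2
    refine ⟨Z, hZ, hZ1, .of_forall hZ0, .of_forall hZα, ?_⟩
    rw [integral_mul_eq_add_integral_sub_mul (hZ.mul_of_top_right hLbdd) hZ hZ1 q, hCTE,
      integral_congr_ae (.of_forall hLZ), integral_const_mul]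
  · rintro r ⟨Z, hZ, hZ1, hZ0, hZα, rfl⟩
    rw [hCTE]
    refine integral_mul_le_add_mul_integral_posPart hint hZ hZ1 hZ0 (hZα.mono fun ω hω => ?_) q
    rwa [← one_div, le_div_iff₀' hα']

/-- on an atomless probability space, for `α ∈ [0,1)` and `L` essentially
bounded, `CTE_α(L) = sup { E[L·Z] : E[Z] = 1, Z ≥ 0 a.s., (1−α)Z ≤ 1 a.s. }`. -/
theorem statement_12 {Ω : Type*} [MeasurableSpace Ω] (P : Measure Ω) [IsProbabilityMeasure P]
    (hatomless : AtomlessMeasure P)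
    (α : ℝ) (hα : α ∈ Ico (0:ℝ) 1)
    (L : Ω → ℝ) (hL : Measurable L) (hLbdd : MemLp L ⊤ P) :
    IsLUB {r : ℝ | ∃ Z : Ω → ℝ, Integrable Z P ∧ (∫ ω, Z ω ∂P) = 1 ∧
        (∀ᵐ ω ∂P, 0 ≤ Z ω) ∧ (∀ᵐ ω ∂P, (1 - α) * Z ω ≤ 1) ∧
        r = ∫ ω, L ω * Z ω ∂P}
      (CTE P L α) :=
  statement_12_general P α hα L hL hLbdd
end

section
/- Let (Ω, F, P) be an atomless probability space, σ a bounded, right-continuous distortion, and L an essentially bounded real random variable. Then π_σ(L) = inf{ E[h(L)] : h : ℝ → ℝ Borel measurable with ∫₀¹ h*(σ(p)) dp ≤ 0 }. -/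
open MeasureTheory Set
open scoped ENNReal

/-- The convex conjugate `h*(y) = sup_x (x·y − h(x))`, with values in `EReal`
(it may take the value `+∞`). -/
noncomputable def convexConj (h : ℝ → ℝ) (y : ℝ) : EReal :=
  ⨆ x : ℝ, ((x * y - h x : ℝ) : EReal)

/-!
By Fenchel–Young, `q p * σ p ≤ h (q p) + h* (σ p)` for the quantile function `q` of `L`.
Since `q` pushes Lebesgue measure on `(0, 1)` forward to the law of `L`, integrating over `p`
gives `π_σ(L) ≤ E[h(L)] + ∫₀¹ h*(σ p) dp ≤ E[h(L)]` for every admissible `h`.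
The infimum is attained by `h = h₀ + c` with `h₀ x = ∫₀ˣ σ(F_L t) dt`: as `σ ∘ F_L` is
nondecreasing and crosses the level `σ p` at `q p`, the slope `σ p` is a subgradient of the
convex function `h₀` at `q p`, so Fenchel–Young holds with equality; the constant `c`
normalises `∫₀¹ h*(σ p) dp` to `0`.
-/

open ProbabilityTheory Filter

namespace DistortedPremium

section Quantile

variable (μ : Measure ℝ)

noncomputable def quantile (u : ℝ) : ℝ := sInf {x | u ≤ cdf μ x}

variable {μ} {u : ℝ}

lemma bddBelow_setOf_le_cdf (hu : 0 < u) : BddBelow {x | u ≤ cdf μ x} := by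
  obtain ⟨a, ha⟩ := ((tendsto_cdf_atBot μ).eventually (gt_mem_nhds hu)).exists
  exact ⟨a, fun x hx => le_of_not_gt fun hxa => (hx.trans ((monotone_cdf μ) hxa.le)).not_gt ha⟩

lemma nonempty_setOf_le_cdf (hu : u < 1) : {x | u ≤ cdf μ x}.Nonempty :=
  ((tendsto_cdf_atTop μ).eventually (lt_mem_nhds hu)).exists.imp fun _ hx => hx.le

lemma le_cdf_quantile (hu : u ∈ Ioo (0:ℝ) 1) : u ≤ cdf μ (quantile μ u) := by
  refine ge_of_tendsto (((cdf μ).right_continuous _).mono Ioi_subset_Ici_self) ?_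
  filter_upwards [self_mem_nhdsWithin] with x hx
  obtain ⟨y, hy, hyx⟩ := exists_lt_of_csInf_lt (nonempty_setOf_le_cdf hu.2) hx
  exact hy.trans ((monotone_cdf μ) hyx.le)

lemma quantile_le_iff (hu : u ∈ Ioo (0:ℝ) 1) {x : ℝ} : quantile μ u ≤ x ↔ u ≤ cdf μ x :=
  ⟨fun h => (le_cdf_quantile hu).trans ((monotone_cdf μ) h),
    fun h => csInf_le (bddBelow_setOf_le_cdf hu.1) h⟩

lemma monotoneOn_quantile : MonotoneOn (quantile μ) (Ioo 0 1) := fun _ hu _ hv huv =>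
  csInf_le_csInf (bddBelow_setOf_le_cdf hu.1) (nonempty_setOf_le_cdf hv.2) fun _ hx => huv.trans hx

lemma aemeasurable_quantile : AEMeasurable (quantile μ) (volume.restrict (Ioo 0 1)) :=
  aemeasurable_restrict_of_monotoneOn measurableSet_Ioo monotoneOn_quantile

lemma volume_Iic_inter_Ioo {a : ℝ} (ha : a ∈ Icc (0:ℝ) 1) :
    volume (Iic a ∩ Ioo 0 1) = ENNReal.ofReal a := by
  refine le_antisymm ?_ ?_
  · calc volume (Iic a ∩ Ioo 0 1) ≤ volume (Ioc 0 a) :=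
          measure_mono fun x hx => ⟨hx.2.1, hx.1⟩
      _ = ENNReal.ofReal a := by rw [Real.volume_Ioc, sub_zero]
  · calc ENNReal.ofReal a = volume (Ioo 0 a) := by rw [Real.volume_Ioo, sub_zero]
      _ ≤ volume (Iic a ∩ Ioo 0 1) :=
          measure_mono fun x hx => ⟨hx.2.le, hx.1, hx.2.trans_le ha.2⟩

lemma map_quantile [IsProbabilityMeasure μ] :
    (volume.restrict (Ioo 0 1)).map (quantile μ) = μ := by
  refine Measure.ext_of_Iic _ _ fun x => ?_
  have hpre : quantile μ ⁻¹' Iic x ∩ Ioo 0 1 = Iic (cdf μ x) ∩ Ioo 0 1 := by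
    ext u
    simp only [mem_inter_iff, mem_preimage, mem_Iic, and_congr_left_iff]
    exact fun hu => quantile_le_iff hu
  rw [Measure.map_apply_of_aemeasurable aemeasurable_quantile measurableSet_Iic,
    Measure.restrict_apply' measurableSet_Ioo, hpre,
    volume_Iic_inter_Ioo ⟨cdf_nonneg μ x, cdf_le_one μ x⟩, ofReal_cdf]

variable [IsProbabilityMeasure μ]

lemma integrable_comp_quantile {f : ℝ → ℝ} (hf : Integrable f μ) :
    IntegrableOn (fun u => f (quantile μ u)) (Ioo 0 1) := by
  rw [← map_quantile (μ := μ)] at hf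
  exact (integrable_map_measure hf.aestronglyMeasurable aemeasurable_quantile).1 hf

lemma integral_comp_quantile {f : ℝ → ℝ} (hf : AEStronglyMeasurable f μ) :
    ∫ u in Ioo 0 1, f (quantile μ u) = ∫ x, f x ∂μ := by
  rw [← map_quantile (μ := μ)] at hf
  rw [← integral_map aemeasurable_quantile hf, map_quantile]

end Quantile

lemma quantileRV_eq_quantile_map {Ω : Type*} [MeasurableSpace Ω] {P : Measure Ω}
    [IsProbabilityMeasure P] {L : Ω → ℝ} (hL : Measurable L) :
    quantileRV P L = quantile (P.map L) := by
  have := Measure.isProbabilityMeasure_map (μ := P) hL.aemeasurable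
  have hcdf (x : ℝ) : cdfRV P L x = cdf (P.map L) x := by
    rw [cdf_eq_real, measureReal_def, Measure.map_apply hL measurableSet_Iic]
    rfl
  ext u
  simp only [quantileRV, quantile, hcdf]

lemma coe_sub_le_convexConj (h : ℝ → ℝ) (x y : ℝ) :
    ((x * y - h x : ℝ) : EReal) ≤ convexConj h y :=
  le_iSup (fun x : ℝ => ((x * y - h x : ℝ) : EReal)) x

lemma convexConj_eq_of_subgradient {h : ℝ → ℝ} {a x₀ : ℝ}
    (hsub : ∀ x, a * (x - x₀) ≤ h x - h x₀) : convexConj h a = ((x₀ * a - h x₀ : ℝ) : EReal) :=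
  le_antisymm (iSup_le fun x => EReal.coe_le_coe_iff.2 (by linarith [hsub x]))
    (coe_sub_le_convexConj h x₀ a)

lemma mul_sub_le_integral {s : ℝ → ℝ} {a x₀ x : ℝ} (hs : IntervalIntegrable s volume x₀ x)
    (hleft : ∀ t < x₀, s t ≤ a) (hright : ∀ t, x₀ ≤ t → a ≤ s t) :
    a * (x - x₀) ≤ ∫ t in x₀..x, s t := by
  rcases le_total x₀ x with hx | hx
  · calc a * (x - x₀) = ∫ _ in x₀..x, a := by simp [mul_comm]
      _ ≤ ∫ t in x₀..x, s t :=
        intervalIntegral.integral_mono_on hx intervalIntegrable_const hs fun t ht => hright t ht.1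
  · have : ∫ t in x..x₀, s t ≤ ∫ _ in x..x₀, a :=
      intervalIntegral.integral_mono_on_of_le_Ioo hx hs.symm intervalIntegrable_const
        fun t ht => hleft t ht.2
    rw [intervalIntegral.integral_symm]
    simp only [intervalIntegral.integral_const, smul_eq_mul] at this
    linarith

lemma abs_le_max_of_monotoneOn {σ : ℝ → ℝ} {a b u : ℝ} (hσ : MonotoneOn σ (Icc a b))
    (hu : u ∈ Icc a b) : |σ u| ≤ max |σ a| |σ b| :=
  abs_le_max_abs_abs (hσ ⟨le_rfl, hu.1.trans hu.2⟩ hu hu.1) (hσ hu ⟨hu.1.trans hu.2, le_rfl⟩ hu.2)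

section Potential

variable (μ : Measure ℝ) (σ : ℝ → ℝ)

noncomputable def distortionPotential (x : ℝ) : ℝ := ∫ t in (0:ℝ)..x, σ (cdf μ t)

variable {μ σ}

lemma cdf_mem_Icc (x : ℝ) : cdf μ x ∈ Icc (0:ℝ) 1 := ⟨cdf_nonneg μ x, cdf_le_one μ x⟩

lemma monotone_comp_cdf (hσ : MonotoneOn σ (Icc 0 1)) : Monotone fun t => σ (cdf μ t) :=
  fun _ _ hst => hσ (cdf_mem_Icc _) (cdf_mem_Icc _) (monotone_cdf μ hst)

lemma continuous_distortionPotential (hσ : MonotoneOn σ (Icc 0 1)) :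
    Continuous (distortionPotential μ σ) :=
  intervalIntegral.continuous_primitive (fun _ _ => (monotone_comp_cdf hσ).intervalIntegrable) 0

lemma abs_distortionPotential_le (hσ : MonotoneOn σ (Icc 0 1)) (x : ℝ) :
    |distortionPotential μ σ x| ≤ max |σ 0| |σ 1| * |x| := by
  simpa [distortionPotential] using intervalIntegral.norm_integral_le_of_norm_le_const
    (a := 0) (b := x) fun t _ =>
      (Real.norm_eq_abs _).trans_le (abs_le_max_of_monotoneOn hσ (cdf_mem_Icc (μ := μ) t))

lemma integrable_distortionPotential (hσ : MonotoneOn σ (Icc 0 1)) (hμ : Integrable id μ) :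
    Integrable (distortionPotential μ σ) μ :=
  (hμ.norm.const_mul _).mono' (continuous_distortionPotential hσ).aestronglyMeasurable
    (ae_of_all _ fun x => abs_distortionPotential_le hσ x)

lemma mul_sub_quantile_le (hσ : MonotoneOn σ (Icc 0 1)) {u : ℝ} (hu : u ∈ Ioo (0:ℝ) 1)
    (x : ℝ) : σ u * (x - quantile μ u) ≤
      distortionPotential μ σ x - distortionPotential μ σ (quantile μ u) := by
  have hint : ∀ a b, IntervalIntegrable (fun t => σ (cdf μ t)) volume a b :=
    fun _ _ => (monotone_comp_cdf hσ).intervalIntegrable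
  have hu' : u ∈ Icc (0:ℝ) 1 := Ioo_subset_Icc_self hu
  rw [distortionPotential, distortionPotential,
    intervalIntegral.integral_interval_sub_left (hint _ _) (hint _ _)]
  refine mul_sub_le_integral (hint _ _) (fun t ht => ?_) (fun t ht => ?_)
  · exact hσ (cdf_mem_Icc t) hu' (not_le.1 (mt (quantile_le_iff hu).2 (not_le.2 ht))).le
  · exact hσ hu' (cdf_mem_Icc t) ((quantile_le_iff hu).1 ht)

lemma convexConj_distortionPotential_add (hσ : MonotoneOn σ (Icc 0 1)) {u : ℝ}
    (hu : u ∈ Ioo (0:ℝ) 1) (c : ℝ) :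
    convexConj (fun x => distortionPotential μ σ x + c) (σ u) =
      ((quantile μ u * σ u - distortionPotential μ σ (quantile μ u) - c : ℝ) : EReal) := by
  rw [convexConj_eq_of_subgradient (x₀ := quantile μ u) fun x => by
    linarith [mul_sub_quantile_le (μ := μ) hσ hu x]]
  norm_cast
  ring

end Potential

/-- The constraint `∫₀¹ h*(σ p) dp ≤ 0`, read as: `h* ∘ σ` is a.e. real-valued on `[0, 1]` and
integrable there, with nonpositive integral. -/
def ConjIntegralNonpos (σ h : ℝ → ℝ) : Prop :=
  ∃ g : ℝ → ℝ, (∀ᵐ p ∂(volume.restrict (Icc (0:ℝ) 1)), convexConj h (σ p) = ((g p : ℝ) : EReal)) ∧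
    IntervalIntegrable g volume 0 1 ∧ (∫ p in (0:ℝ)..1, g p) ≤ 0

variable {μ : Measure ℝ} [IsProbabilityMeasure μ] {σ : ℝ → ℝ}

lemma integrableOn_quantile_mul (hμ : Integrable id μ) (hσ : MonotoneOn σ (Icc 0 1)) :
    IntegrableOn (fun u => quantile μ u * σ u) (Ioo 0 1) :=
  (integrable_comp_quantile hμ).mul_bdd
    ((aemeasurable_restrict_of_monotoneOn measurableSet_Icc hσ).mono_measure
      (Measure.restrict_mono Ioo_subset_Icc_self le_rfl)).aestronglyMeasurable
    (ae_restrict_of_forall_mem measurableSet_Ioo fun _ hu =>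
      (Real.norm_eq_abs _).trans_le (abs_le_max_of_monotoneOn hσ (Ioo_subset_Icc_self hu)))

lemma integral_quantile_mul_le (hμ : Integrable id μ) (hσ : MonotoneOn σ (Icc 0 1))
    {h : ℝ → ℝ} (hh : Integrable h μ) (hconj : ConjIntegralNonpos σ h) :
    ∫ p in (0:ℝ)..1, quantile μ p * σ p ≤ ∫ x, h x ∂μ := by
  obtain ⟨g, hg, hgi, hg0⟩ := hconj
  have hg' : IntegrableOn g (Ioo 0 1) :=
    (intervalIntegrable_iff_integrableOn_Ioo_of_le zero_le_one).1 hgi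
  have fenchel_young : ∀ᵐ p ∂(volume.restrict (Ioo 0 1)),
      quantile μ p * σ p ≤ h (quantile μ p) + g p := by
    filter_upwards [ae_restrict_of_ae_restrict_of_subset Ioo_subset_Icc_self hg] with p hp
    have := coe_sub_le_convexConj h (quantile μ p) (σ p)
    rw [hp, EReal.coe_le_coe_iff] at this
    linarith
  rw [intervalIntegral.integral_of_le zero_le_one, integral_Ioc_eq_integral_Ioo] at hg0 ⊢
  calc ∫ p in Ioo 0 1, quantile μ p * σ p ≤ ∫ p in Ioo 0 1, (h (quantile μ p) + g p) :=
        integral_mono_ae (integrableOn_quantile_mul hμ hσ) ((integrable_comp_quantile hh).add hg')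
          fenchel_young
    _ = ∫ x, h x ∂μ + ∫ p in Ioo 0 1, g p := by
        rw [integral_add (integrable_comp_quantile hh) hg',
          integral_comp_quantile hh.aestronglyMeasurable]
    _ ≤ ∫ x, h x ∂μ := by linarith

lemma exists_conjIntegralNonpos_integral_eq (hμ : Integrable id μ)
    (hσ : MonotoneOn σ (Icc 0 1)) :
    ∃ h : ℝ → ℝ, Measurable h ∧ Integrable h μ ∧ ConjIntegralNonpos σ h ∧
      ∫ p in (0:ℝ)..1, quantile μ p * σ p = ∫ x, h x ∂μ := by
  set h₀ := distortionPotential μ σ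
  have hh₀ : Integrable h₀ μ := integrable_distortionPotential hσ hμ
  have hgap : IntegrableOn (fun p => quantile μ p * σ p - h₀ (quantile μ p)) (Ioo 0 1) :=
    (integrableOn_quantile_mul hμ hσ).sub (integrable_comp_quantile hh₀)
  set c := ∫ p in Ioo 0 1, (quantile μ p * σ p - h₀ (quantile μ p))
  have hc : c = (∫ p in Ioo 0 1, quantile μ p * σ p) - ∫ p in Ioo 0 1, h₀ (quantile μ p) :=
    integral_sub (integrableOn_quantile_mul hμ hσ) (integrable_comp_quantile hh₀)
  have hIoo : volume.real (Ioo (0:ℝ) 1) = 1 := by simp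
  refine ⟨fun x => h₀ x + c, (continuous_distortionPotential hσ).measurable.add_const c,
    hh₀.add (integrable_const c), ⟨fun p => quantile μ p * σ p - h₀ (quantile μ p) - c, ?_, ?_, ?_⟩,
    ?_⟩
  · rw [← Measure.restrict_congr_set Ioo_ae_eq_Icc]
    filter_upwards [ae_restrict_mem measurableSet_Ioo] with p hp
    exact convexConj_distortionPotential_add hσ hp c
  · exact (intervalIntegrable_iff_integrableOn_Ioo_of_le zero_le_one).2
      (hgap.sub (integrable_const c))
  · rw [intervalIntegral.integral_of_le zero_le_one, integral_Ioc_eq_integral_Ioo,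
      integral_sub hgap (integrable_const c), setIntegral_const, hIoo, one_smul, sub_self]
  · rw [intervalIntegral.integral_of_le zero_le_one, integral_Ioc_eq_integral_Ioo,
      integral_add hh₀ (integrable_const c), ← integral_comp_quantile hh₀.aestronglyMeasurable,
      integral_const, probReal_univ, one_smul, hc]
    ring

theorem isGLB_integral_conjIntegralNonpos (hμ : Integrable id μ) (hσ : MonotoneOn σ (Icc 0 1)) :
    IsGLB {r : ℝ | ∃ h : ℝ → ℝ, Measurable h ∧ Integrable h μ ∧ ConjIntegralNonpos σ h ∧
      r = ∫ x, h x ∂μ} (∫ p in (0:ℝ)..1, quantile μ p * σ p) := by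
  refine ⟨?_, fun b hb => ?_⟩
  · rintro r ⟨h, -, hh, hconj, rfl⟩
    exact integral_quantile_mul_le hμ hσ hh hconj
  · obtain ⟨h, hmeas, hh, hconj, heq⟩ := exists_conjIntegralNonpos_integral_eq hμ hσ
    exact hb ⟨h, hmeas, hh, hconj, heq⟩

end DistortedPremium

open DistortedPremium

theorem statement_16_general {Ω : Type*} [MeasurableSpace Ω] (P : Measure Ω) [IsProbabilityMeasure P]
    (σ : ℝ → ℝ)
    (hσ_mono : MonotoneOn σ (Icc (0:ℝ) 1))
    (L : Ω → ℝ) (hL : Measurable L) (hLbdd : MemLp L ⊤ P) :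
    IsGLB {r : ℝ | ∃ h : ℝ → ℝ, Measurable h ∧ Integrable (fun ω => h (L ω)) P ∧
        (∃ g : ℝ → ℝ,
          (∀ᵐ p ∂(volume.restrict (Icc (0:ℝ) 1)), convexConj h (σ p) = ((g p : ℝ) : EReal)) ∧
          IntervalIntegrable g volume 0 1 ∧
          (∫ p in (0:ℝ)..1, g p) ≤ 0) ∧
        r = ∫ ω, h (L ω) ∂P}
      (distortedPremium P L σ) := by
  set μ := P.map L
  have : IsProbabilityMeasure μ := Measure.isProbabilityMeasure_map hL.aemeasurable
  have hμ : Integrable id μ :=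
    (integrable_map_measure aestronglyMeasurable_id hL.aemeasurable).2 (hLbdd.integrable le_top)
  have hset : {r : ℝ | ∃ h : ℝ → ℝ, Measurable h ∧ Integrable (fun ω => h (L ω)) P ∧
      ConjIntegralNonpos σ h ∧ r = ∫ ω, h (L ω) ∂P} =
      {r : ℝ | ∃ h : ℝ → ℝ, Measurable h ∧ Integrable h μ ∧ ConjIntegralNonpos σ h ∧
        r = ∫ x, h x ∂μ} := by
    ext r
    refine exists_congr fun h => and_congr_right fun hh => ?_
    rw [integrable_map_measure hh.aestronglyMeasurable hL.aemeasurable,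
      integral_map hL.aemeasurable hh.aestronglyMeasurable]
    rfl
  rw [distortedPremium, quantileRV_eq_quantile_map hL]
  exact hset ▸ isGLB_integral_conjIntegralNonpos hμ hσ_mono

/-- on an atomless probability space, for a bounded right-continuous distortion
`σ` and an essentially bounded `L`,
`π_σ(L) = inf { E[h(L)] : h Borel measurable with ∫₀¹ h*(σ(p)) dp ≤ 0 }`. -/
theorem statement_16 {Ω : Type*} [MeasurableSpace Ω] (P : Measure Ω) [IsProbabilityMeasure P]
    (hatomless : AtomlessMeasure P)
    (σ : ℝ → ℝ)
    (hσ_nonneg : ∀ u ∈ Icc (0:ℝ) 1, 0 ≤ σ u)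
    (hσ_mono : MonotoneOn σ (Icc (0:ℝ) 1))
    (hσ_bdd : BddAbove (σ '' Icc (0:ℝ) 1))
    (hσ_rc : ∀ p ∈ Ico (0:ℝ) 1, ContinuousWithinAt σ (Ici p) p)
    (hσ_int : ∫ u in (0:ℝ)..1, σ u = 1)
    (L : Ω → ℝ) (hL : Measurable L) (hLbdd : MemLp L ⊤ P) :
    IsGLB {r : ℝ | ∃ h : ℝ → ℝ, Measurable h ∧ Integrable (fun ω => h (L ω)) P ∧
        (∃ g : ℝ → ℝ,
          (∀ᵐ p ∂(volume.restrict (Icc (0:ℝ) 1)), convexConj h (σ p) = ((g p : ℝ) : EReal)) ∧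
          IntervalIntegrable g volume 0 1 ∧
          (∫ p in (0:ℝ)..1, g p) ≤ 0) ∧
        r = ∫ ω, h (L ω) ∂P}
      (distortedPremium P L σ) :=
  statement_16_general P σ hσ_mono L hL hLbdd
end
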